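/- arXiv:0905.4176 — 3 statements merged into one kernel-verified Lean document; each statement's English description precedes it below -/
import Mathlib

section
/- Semigroup Grönwall comparison: Let v ∈ C²(ℝ) be positive with v, v′, v″ of at most polynomial growth, and suppose Lv(x) ≤ A₁ v(x) for all x ∈ ℝ, where L = (1/4)d²/dx² − (x/2)d/dx and A₁ ≥ 0. Then for every s ≥ 0 and every x ∈ ℝ, (e^{sL}v)(x) ≤ e^{sA₁} v(x), where e^{sL} is the Ornstein–Uhlenbeck (Mehler) semigroup. -/
open MeasureTheory

/-- The Ornstein–Uhlenbeck generator `L = (1/4)d²/dx² − (x/2)d/dx`. -/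
noncomputable def OUgen (f : ℝ → ℝ) : ℝ → ℝ := fun x =>
  (1 / 4) * deriv (deriv f) x - (x / 2) * deriv f x

/-- The Ornstein–Uhlenbeck (Mehler) semigroup `e^{tL}`:
`(e^{tL}f)(x) = (2π)^{−1/2} ∫ f(e^{−t/2}x + √((1−e^{−t})/2)·ξ) e^{−ξ²/2} dξ`. -/
noncomputable def mehler (t : ℝ) (f : ℝ → ℝ) : ℝ → ℝ := fun x =>
  (2 * Real.pi) ^ (-(1 : ℝ) / 2) *
    ∫ ξ : ℝ, f (Real.exp (-t / 2) * x + Real.sqrt ((1 - Real.exp (-t)) / 2) * ξ) *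
      Real.exp (-ξ ^ 2 / 2)

/-!
For `t > 0`, differentiating the Mehler integral under the integral sign and integrating by parts
against the Gaussian weight (Stein's identity `∫ ξ w(ξ) e^{-ξ²/2} = ∫ w'(ξ) e^{-ξ²/2}`) gives the
Kolmogorov equation `∂ₜ e^{tL}v = e^{tL}(Lv)`. As `e^{tL}` is monotone, `Lv ≤ A₁v` turns this into
`∂ₜ e^{tL}v ≤ A₁ e^{tL}v`, so `e^{-A₁t} (e^{tL}v)(x)` is nonincreasing on `[0, s]` and starts at
`v(x)`. Polynomial growth of `v, v', v''` makes all the Gaussian integrals converge and dominates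
the parametric integrands, uniformly for `t` in compact subsets of `(0, ∞)`.
-/

open Real Set Metric Filter

def HasPolyGrowth (w : ℝ → ℝ) : Prop :=
  ∃ (C : ℝ) (k : ℕ), ∀ y, |w y| ≤ C * (1 + y ^ 2) ^ k

namespace HasPolyGrowth

variable {f g : ℝ → ℝ}

theorem congr (hf : HasPolyGrowth f) (hfg : ∀ y, f y = g y) : HasPolyGrowth g := by
  simpa only [HasPolyGrowth, hfg] using hf

theorem const_mul (hf : HasPolyGrowth f) (c : ℝ) : HasPolyGrowth fun y => c * f y := by
  obtain ⟨C, k, hC⟩ := hf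
  refine ⟨|c| * C, k, fun y => ?_⟩
  rw [abs_mul, mul_assoc]
  exact mul_le_mul_of_nonneg_left (hC y) (abs_nonneg c)

theorem add (hf : HasPolyGrowth f) (hg : HasPolyGrowth g) : HasPolyGrowth fun y => f y + g y := by
  obtain ⟨C₁, k₁, hC₁⟩ := hf
  obtain ⟨C₂, k₂, hC₂⟩ := hg
  refine ⟨|C₁| + |C₂|, k₁ + k₂, fun y => ?_⟩
  have hy : 1 ≤ 1 + y ^ 2 := le_add_of_nonneg_right (sq_nonneg y)
  have h₁ : C₁ * (1 + y ^ 2) ^ k₁ ≤ |C₁| * (1 + y ^ 2) ^ (k₁ + k₂) :=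
    mul_le_mul (le_abs_self _) (pow_le_pow_right₀ hy (Nat.le_add_right _ _)) (by positivity)
      (abs_nonneg _)
  have h₂ : C₂ * (1 + y ^ 2) ^ k₂ ≤ |C₂| * (1 + y ^ 2) ^ (k₁ + k₂) :=
    mul_le_mul (le_abs_self _) (pow_le_pow_right₀ hy (Nat.le_add_left _ _)) (by positivity)
      (abs_nonneg _)
  calc |f y + g y| ≤ C₁ * (1 + y ^ 2) ^ k₁ + C₂ * (1 + y ^ 2) ^ k₂ :=
        (abs_add_le _ _).trans (add_le_add (hC₁ y) (hC₂ y))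
    _ ≤ |C₁| * (1 + y ^ 2) ^ (k₁ + k₂) + |C₂| * (1 + y ^ 2) ^ (k₁ + k₂) := add_le_add h₁ h₂
    _ = (|C₁| + |C₂|) * (1 + y ^ 2) ^ (k₁ + k₂) := by ring

theorem mul (hf : HasPolyGrowth f) (hg : HasPolyGrowth g) : HasPolyGrowth fun y => f y * g y := by
  obtain ⟨C₁, k₁, hC₁⟩ := hf
  obtain ⟨C₂, k₂, hC₂⟩ := hg
  refine ⟨C₁ * C₂, k₁ + k₂, fun y => ?_⟩
  rw [abs_mul, pow_add, mul_mul_mul_comm]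
  exact mul_le_mul (hC₁ y) (hC₂ y) (abs_nonneg _) ((abs_nonneg _).trans (hC₁ y))

end HasPolyGrowth

theorem abs_comp_affine_le {w : ℝ → ℝ} {C : ℝ} {k : ℕ} (hw : ∀ y, |w y| ≤ C * (1 + y ^ 2) ^ k)
    {b σ B : ℝ} (hb : |b| ≤ B) (hσ : |σ| ≤ B) (ξ : ℝ) :
    |w (b + σ * ξ)| ≤ |C| * (1 + 2 * B ^ 2) ^ k * (1 + ξ ^ 2) ^ k := by
  have hb2 : b ^ 2 ≤ B ^ 2 := sq_le_sq' (abs_le.1 hb).1 (abs_le.1 hb).2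
  have hσ2 : σ ^ 2 ≤ B ^ 2 := sq_le_sq' (abs_le.1 hσ).1 (abs_le.1 hσ).2
  have key : 1 + (b + σ * ξ) ^ 2 ≤ (1 + 2 * B ^ 2) * (1 + ξ ^ 2) := by
    nlinarith [sq_nonneg (b - σ * ξ), mul_le_mul_of_nonneg_right hσ2 (sq_nonneg ξ)]
  calc |w (b + σ * ξ)| ≤ |C| * ((1 + 2 * B ^ 2) * (1 + ξ ^ 2)) ^ k :=
        (hw _).trans (mul_le_mul (le_abs_self C) (pow_le_pow_left₀ (by positivity) key k)
          (by positivity) (abs_nonneg C))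
    _ = |C| * (1 + 2 * B ^ 2) ^ k * (1 + ξ ^ 2) ^ k := by rw [mul_pow, mul_assoc]

theorem abs_affine_le {β τ B : ℝ} (hβ : |β| ≤ B) (hτ : |τ| ≤ B) (ξ : ℝ) :
    |β + τ * ξ| ≤ 2 * B * (1 + ξ ^ 2) := by
  have hξ : |ξ| ≤ 1 + ξ ^ 2 := by nlinarith [sq_abs ξ, sq_nonneg (|ξ| - 1)]
  calc |β + τ * ξ| ≤ |β| + |τ| * |ξ| := by rw [← abs_mul]; exact abs_add_le _ _
    _ ≤ B + B * (1 + ξ ^ 2) :=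
        add_le_add hβ (mul_le_mul hτ hξ (abs_nonneg _) ((abs_nonneg _).trans hτ))
    _ ≤ 2 * B * (1 + ξ ^ 2) := by nlinarith [(abs_nonneg β).trans hβ, sq_nonneg ξ]

theorem HasPolyGrowth.comp_affine {w : ℝ → ℝ} (hw : HasPolyGrowth w) (b σ : ℝ) :
    HasPolyGrowth fun ξ => w (b + σ * ξ) := by
  obtain ⟨C, k, hC⟩ := hw
  exact ⟨_, k, abs_comp_affine_le hC (le_max_left |b| |σ|) (le_max_right _ _)⟩

theorem hasPolyGrowth_affine (β τ : ℝ) : HasPolyGrowth fun ξ => β + τ * ξ :=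
  ⟨_, 1, by simpa only [pow_one] using abs_affine_le (le_max_left |β| |τ|) (le_max_right _ _)⟩

theorem integrable_one_add_sq_pow_mul_exp (k : ℕ) :
    Integrable fun ξ : ℝ => (1 + ξ ^ 2) ^ k * exp (-ξ ^ 2 / 2) := by
  have hmoment (m : ℕ) : Integrable fun ξ : ℝ => ξ ^ (2 * m) * exp (-(1 / 2) * ξ ^ 2) := by
    simpa only [rpow_natCast] using integrable_rpow_mul_exp_neg_mul_sq (b := 1 / 2)
      (by norm_num) (s := ((2 * m : ℕ) : ℝ))
      (neg_one_lt_zero.trans_le (Nat.cast_nonneg _))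
  refine (integrable_finsetSum (Finset.range (k + 1))
    fun m _ => (hmoment m).const_mul (k.choose m : ℝ)).congr (Eventually.of_forall fun ξ => ?_)
  beta_reduce
  rw [add_comm 1 (ξ ^ 2), add_pow, Finset.sum_mul]
  refine Finset.sum_congr rfl fun m _ => ?_
  rw [pow_mul]
  ring_nf

theorem HasPolyGrowth.integrable_mul_exp {f : ℝ → ℝ} (hf : HasPolyGrowth f) (hc : Continuous f) :
    Integrable fun ξ => f ξ * exp (-ξ ^ 2 / 2) := by
  obtain ⟨C, k, hC⟩ := hf
  refine ((integrable_one_add_sq_pow_mul_exp k).const_mul C).mono' (by fun_prop)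
    (Eventually.of_forall fun ξ => ?_)
  rw [norm_mul, norm_of_nonneg (exp_pos _).le, ← mul_assoc, Real.norm_eq_abs]
  exact mul_le_mul_of_nonneg_right (hC ξ) (exp_pos _).le

theorem HasPolyGrowth.integrable_id_mul_mul_exp {f : ℝ → ℝ} (hf : HasPolyGrowth f)
    (hc : Continuous f) : Integrable fun ξ => ξ * f ξ * exp (-ξ ^ 2 / 2) :=
  (((hasPolyGrowth_affine 0 1).mul hf).integrable_mul_exp (by fun_prop)).congr
    (Eventually.of_forall fun ξ => by simp)

theorem gaussian_integration_by_parts {w w' : ℝ → ℝ} (hw : ∀ y, HasDerivAt w (w' y) y)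
    (hw'c : Continuous w') (hgw : HasPolyGrowth w) (hgw' : HasPolyGrowth w') :
    ∫ ξ, ξ * w ξ * exp (-ξ ^ 2 / 2) = ∫ ξ, w' ξ * exp (-ξ ^ 2 / 2) := by
  have hwc : Continuous w := continuous_iff_continuousAt.2 fun y => (hw y).continuousAt
  have hγ (ξ : ℝ) : HasDerivAt (fun ξ => exp (-ξ ^ 2 / 2)) (-ξ * exp (-ξ ^ 2 / 2)) ξ :=
    ((hasDerivAt_pow 2 ξ).neg.div_const 2).exp.congr_deriv (by norm_num; ring)
  have hibp := integral_mul_deriv_eq_deriv_mul_of_integrable (fun y _ => hw y) (fun ξ _ => hγ ξ)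
    ((hgw.integrable_id_mul_mul_exp hwc).neg.congr
      (Eventually.of_forall fun ξ => by simp only [Pi.neg_apply, Pi.mul_apply]; ring))
    (hgw'.integrable_mul_exp hw'c) (hgw.integrable_mul_exp hwc)
  rw [← neg_eq_iff_eq_neg, ← integral_neg] at hibp
  rw [← hibp]
  congr 1 with ξ
  ring

theorem continuousOn_integral_comp_affine_mul_exp {w : ℝ → ℝ} (hw : Continuous w)
    (hgw : HasPolyGrowth w) {b σ : ℝ → ℝ} {s : Set ℝ} {B : ℝ} (hb : ContinuousOn b s)
    (hσ : ContinuousOn σ s) (hbB : ∀ t ∈ s, |b t| ≤ B) (hσB : ∀ t ∈ s, |σ t| ≤ B) :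
    ContinuousOn (fun t => ∫ ξ, w (b t + σ t * ξ) * exp (-ξ ^ 2 / 2)) s := by
  obtain ⟨C, k, hC⟩ := hgw
  refine continuousOn_of_dominated (bound := fun ξ => |C| * (1 + 2 * B ^ 2) ^ k *
      ((1 + ξ ^ 2) ^ k * exp (-ξ ^ 2 / 2)))
    (fun t _ => (by fun_prop : Continuous _).aestronglyMeasurable) (fun t ht => ?_)
    ((integrable_one_add_sq_pow_mul_exp k).const_mul _) (Eventually.of_forall fun ξ => ?_)
  · refine Eventually.of_forall fun ξ => ?_
    rw [norm_mul, norm_of_nonneg (exp_pos _).le, Real.norm_eq_abs, ← mul_assoc]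
    exact mul_le_mul_of_nonneg_right (abs_comp_affine_le hC (hbB t ht) (hσB t ht) ξ)
      (exp_pos _).le
  · exact (hw.comp_continuousOn (hb.add (hσ.mul continuousOn_const))).mul continuousOn_const

theorem hasDerivAt_integral_comp_affine_mul_exp {w w' : ℝ → ℝ}
    (hw : ∀ y, HasDerivAt w (w' y) y) (hw'c : Continuous w')
    (hgw : HasPolyGrowth w) (hgw' : HasPolyGrowth w')
    {b σ b' σ' : ℝ → ℝ} {t₀ ε : ℝ} (hε : 0 < ε)
    (hb : ∀ t ∈ closedBall t₀ ε, HasDerivAt b (b' t) t)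
    (hσ : ∀ t ∈ closedBall t₀ ε, HasDerivAt σ (σ' t) t)
    (hb'c : ContinuousOn b' (closedBall t₀ ε)) (hσ'c : ContinuousOn σ' (closedBall t₀ ε)) :
    HasDerivAt (fun t => ∫ ξ, w (b t + σ t * ξ) * exp (-ξ ^ 2 / 2))
      (∫ ξ, w' (b t₀ + σ t₀ * ξ) * (b' t₀ + σ' t₀ * ξ) * exp (-ξ ^ 2 / 2)) t₀ := by
  have hwc : Continuous w := continuous_iff_continuousAt.2 fun y => (hw y).continuousAt
  have hbc : ContinuousOn b (closedBall t₀ ε) :=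
    fun t ht => (hb t ht).continuousAt.continuousWithinAt
  have hσc : ContinuousOn σ (closedBall t₀ ε) :=
    fun t ht => (hσ t ht).continuousAt.continuousWithinAt
  obtain ⟨B, hB⟩ := (isCompact_closedBall t₀ ε).exists_bound_of_continuousOn
    (((hbc.abs.add hσc.abs).add hb'c.abs).add hσ'c.abs)
  have hB' (t : ℝ) (ht : t ∈ ball t₀ ε) : (|b t| ≤ B ∧ |σ t| ≤ B) ∧ |b' t| ≤ B ∧ |σ' t| ≤ B := by
    have := hB t (ball_subset_closedBall ht)
    simp only [Pi.add_apply, Real.norm_eq_abs] at this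
    rw [abs_of_nonneg (by positivity)] at this
    refine ⟨⟨?_, ?_⟩, ?_, ?_⟩ <;> linarith [abs_nonneg (b t), abs_nonneg (σ t), abs_nonneg (b' t),
      abs_nonneg (σ' t)]
  obtain ⟨C, k, hC⟩ := hgw'
  refine (hasDerivAt_integral_of_dominated_loc_of_deriv_le (ball_mem_nhds t₀ hε)
    (F := fun t ξ => w (b t + σ t * ξ) * exp (-ξ ^ 2 / 2))
    (F' := fun t ξ => w' (b t + σ t * ξ) * (b' t + σ' t * ξ) * exp (-ξ ^ 2 / 2))
    (bound := fun ξ => |C| * (1 + 2 * B ^ 2) ^ k * (2 * B) *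
      ((1 + ξ ^ 2) ^ (k + 1) * exp (-ξ ^ 2 / 2)))
    (Eventually.of_forall fun t => (by fun_prop : Continuous _).aestronglyMeasurable)
    ((hgw.comp_affine _ _).integrable_mul_exp (by fun_prop))
    (by fun_prop : Continuous _).aestronglyMeasurable (Eventually.of_forall fun ξ t ht => ?_)
    ((integrable_one_add_sq_pow_mul_exp (k + 1)).const_mul _)
    (Eventually.of_forall fun ξ t ht => ?_)).2
  · obtain ⟨⟨hbB, hσB⟩, hb'B, hσ'B⟩ := hB' t ht
    rw [norm_mul, norm_mul, norm_of_nonneg (exp_pos _).le, Real.norm_eq_abs, Real.norm_eq_abs,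
      pow_succ, ← mul_assoc]
    have := mul_le_mul (abs_comp_affine_le hC hbB hσB ξ) (abs_affine_le hb'B hσ'B ξ)
      (abs_nonneg _) (by positivity)
    refine mul_le_mul_of_nonneg_right (this.trans_eq (by ring)) (exp_pos _).le
  · exact ((hw _).comp t ((hb t (ball_subset_closedBall ht)).add
      ((hσ t (ball_subset_closedBall ht)).mul_const ξ))).mul_const _

theorem integral_comp_affine_mul_affine_mul_exp {w w' : ℝ → ℝ}
    (hw : ∀ y, HasDerivAt w (w' y) y) (hw'c : Continuous w')
    (hgw : HasPolyGrowth w) (hgw' : HasPolyGrowth w') (b σ β τ : ℝ) :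
    ∫ ξ, w (b + σ * ξ) * (β + τ * ξ) * exp (-ξ ^ 2 / 2) =
      β * (∫ ξ, w (b + σ * ξ) * exp (-ξ ^ 2 / 2)) +
        τ * σ * ∫ ξ, w' (b + σ * ξ) * exp (-ξ ^ 2 / 2) := by
  have hwc : Continuous w := continuous_iff_continuousAt.2 fun y => (hw y).continuousAt
  have hstein := gaussian_integration_by_parts (w := fun ξ => w (b + σ * ξ))
    (w' := fun ξ => σ * w' (b + σ * ξ))
    (fun ξ => ((hw _).comp ξ (((hasDerivAt_id ξ).const_mul σ).const_add b)).congr_deriv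
      (by simp [mul_comm]))
    (by fun_prop) (hgw.comp_affine b σ) ((hgw'.comp_affine b σ).const_mul σ)
  calc ∫ ξ, w (b + σ * ξ) * (β + τ * ξ) * exp (-ξ ^ 2 / 2)
      = ∫ ξ, β * (w (b + σ * ξ) * exp (-ξ ^ 2 / 2)) +
          τ * (ξ * w (b + σ * ξ) * exp (-ξ ^ 2 / 2)) := by
        congr 1 with ξ
        ring
    _ = β * (∫ ξ, w (b + σ * ξ) * exp (-ξ ^ 2 / 2)) +
          τ * ∫ ξ, ξ * w (b + σ * ξ) * exp (-ξ ^ 2 / 2) := by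
        rw [integral_add (((hgw.comp_affine b σ).integrable_mul_exp (by fun_prop)).const_mul β)
          (((hgw.comp_affine b σ).integrable_id_mul_mul_exp (by fun_prop)).const_mul τ),
          integral_const_mul, integral_const_mul]
    _ = _ := by
        simp_rw [hstein, mul_assoc σ, integral_const_mul, mul_assoc τ]

theorem le_exp_mul_of_hasDerivAt_le_mul {F F' : ℝ → ℝ} {A a b : ℝ} (hab : a ≤ b)
    (hF : ContinuousOn F (Icc a b)) (hF' : ∀ t ∈ Ioo a b, HasDerivAt F (F' t) t)
    (hle : ∀ t ∈ Ioo a b, F' t ≤ A * F t) : F b ≤ exp (A * (b - a)) * F a := by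
  have hanti : AntitoneOn (fun t => exp (-A * t) * F t) (Icc a b) := by
    refine antitoneOn_of_hasDerivWithinAt_nonpos (convex_Icc a b)
      ((by fun_prop : Continuous fun t => exp (-A * t)).continuousOn.mul hF)
      (f' := fun t => exp (-A * t) * (F' t - A * F t)) (fun t ht => ?_) (fun t ht => ?_)
    · rw [interior_Icc] at ht
      exact ((((hasDerivAt_id t).const_mul (-A)).exp.mul (hF' t ht)).congr_deriv
        (by simp only [id]; ring)).hasDerivWithinAt
    · rw [interior_Icc] at ht
      exact mul_nonpos_of_nonneg_of_nonpos (exp_pos _).le (sub_nonpos.2 (hle t ht))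
  have := hanti ⟨le_rfl, hab⟩ ⟨hab, le_rfl⟩ hab
  calc F b = exp (A * b) * (exp (-A * b) * F b) := by
        rw [← mul_assoc, ← exp_add, show A * b + -A * b = 0 by ring, exp_zero, one_mul]
    _ ≤ exp (A * b) * (exp (-A * a) * F a) := mul_le_mul_of_nonneg_left this (exp_pos _).le
    _ = exp (A * (b - a)) * F a := by
        rw [← mul_assoc, ← exp_add]
        ring_nf

noncomputable def ouStd (t : ℝ) : ℝ := √((1 - exp (-t)) / 2)

@[fun_prop]
theorem continuous_ouStd : Continuous ouStd := by
  unfold ouStd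
  fun_prop

theorem abs_ouStd_le_one (t : ℝ) : |ouStd t| ≤ 1 := by
  rw [ouStd, abs_of_nonneg (sqrt_nonneg _)]
  exact sqrt_le_one.2 (by linarith [exp_pos (-t)])

theorem ouStd_sq {t : ℝ} (ht : 0 ≤ t) : ouStd t ^ 2 = (1 - exp (-t)) / 2 :=
  sq_sqrt (by linarith [exp_le_one_iff.2 (neg_nonpos.2 ht)])

theorem ouStd_pos {t : ℝ} (ht : 0 < t) : 0 < ouStd t :=
  sqrt_pos.2 (by linarith [exp_lt_one_iff.2 (neg_lt_zero.2 ht)])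

theorem hasDerivAt_ouStd {t : ℝ} (ht : 0 < t) :
    HasDerivAt ouStd (exp (-t) / (4 * ouStd t)) t := by
  have hu : HasDerivAt (fun t => (1 - exp (-t)) / 2) (exp (-t) / 2) t :=
    (((hasDerivAt_neg t).exp).const_sub 1).div_const 2 |>.congr_deriv (by ring)
  have hne : (1 - exp (-t)) / 2 ≠ 0 := by linarith [exp_lt_one_iff.2 (neg_lt_zero.2 ht)]
  refine ((hasDerivAt_sqrt hne).comp t hu).congr_deriv ?_
  rw [ouStd]
  field_simp
  ring

theorem mehler_zero (f : ℝ → ℝ) (x : ℝ) : mehler 0 f x = f x := by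
  have hγ : ∫ ξ : ℝ, exp (-ξ ^ 2 / 2) = √(2 * π) := by
    simpa [div_eq_inv_mul, ← neg_mul] using integral_gaussian (1 / 2)
  simp only [mehler, neg_zero, zero_div, exp_zero, sub_self, sqrt_zero, zero_mul, one_mul,
    add_zero, integral_const_mul, hγ]
  rw [sqrt_eq_rpow, mul_left_comm, ← rpow_add (by positivity)]
  norm_num

theorem mehler_const_mul (t c : ℝ) (f : ℝ → ℝ) (x : ℝ) :
    mehler t (fun y => c * f y) x = c * mehler t f x := by
  simp only [mehler, mul_assoc, integral_const_mul]
  ring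

theorem mehler_mono {f g : ℝ → ℝ} (hf : Continuous f) (hgf : HasPolyGrowth f)
    (hg : Continuous g) (hgg : HasPolyGrowth g) (hfg : ∀ y, f y ≤ g y) (t x : ℝ) :
    mehler t f x ≤ mehler t g x :=
  mul_le_mul_of_nonneg_left
    (integral_mono ((hgf.comp_affine _ _).integrable_mul_exp (by fun_prop))
      ((hgg.comp_affine _ _).integrable_mul_exp (by fun_prop))
      fun ξ => mul_le_mul_of_nonneg_right (hfg _) (exp_pos _).le)
    (by positivity)

theorem continuousOn_mehler {v : ℝ → ℝ} (hv : Continuous v) (hgv : HasPolyGrowth v) (x : ℝ) :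
    ContinuousOn (fun t => mehler t v x) (Ici 0) := by
  refine continuousOn_const.mul (continuousOn_integral_comp_affine_mul_exp hv hgv
    (B := max |x| 1) (by fun_prop) (by fun_prop) (fun t ht => ?_)
    (fun t _ => (abs_ouStd_le_one t).trans (le_max_right _ _)))
  rw [abs_mul, abs_of_pos (exp_pos _)]
  have hexp : exp (-t / 2) ≤ 1 := exp_le_one_iff.2 (by linarith [mem_Ici.1 ht])
  exact (mul_le_of_le_one_left (abs_nonneg x) hexp).trans (le_max_left _ _)

theorem hasPolyGrowth_ouGen {v : ℝ → ℝ} (h₁ : HasPolyGrowth (deriv v))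
    (h₂ : HasPolyGrowth (deriv (deriv v))) : HasPolyGrowth (OUgen v) :=
  ((h₂.const_mul (1 / 4)).add ((hasPolyGrowth_affine 0 (-1 / 2)).mul h₁)).congr
    fun y => by simp only [OUgen]; ring

theorem continuous_ouGen {v : ℝ → ℝ} (hv : ContDiff ℝ 2 v) : Continuous (OUgen v) := by
  have hv₁ : ContDiff ℝ 1 (deriv v) := hv.deriv'
  have hc₁ := hv₁.continuous
  have hc₂ := hv₁.continuous_deriv le_rfl
  unfold OUgen
  fun_prop

theorem integral_ouGen_comp_affine_mul_exp {v : ℝ → ℝ} (hv : ContDiff ℝ 2 v)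
    (h₁ : HasPolyGrowth (deriv v)) (h₂ : HasPolyGrowth (deriv (deriv v))) (b σ : ℝ) :
    ∫ ξ, OUgen v (b + σ * ξ) * exp (-ξ ^ 2 / 2) =
      -(b / 2) * (∫ ξ, deriv v (b + σ * ξ) * exp (-ξ ^ 2 / 2)) +
        (1 / 4 - σ ^ 2 / 2) * ∫ ξ, deriv (deriv v) (b + σ * ξ) * exp (-ξ ^ 2 / 2) := by
  have hv₁ : ContDiff ℝ 1 (deriv v) := hv.deriv'
  have hc₂ : Continuous (deriv (deriv v)) := hv₁.continuous_deriv le_rfl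
  have hIBP := integral_comp_affine_mul_affine_mul_exp
    (fun y => (hv₁.differentiable one_ne_zero y).hasDerivAt) hc₂ h₁ h₂ b σ (b / 2) (σ / 2)
  calc ∫ ξ, OUgen v (b + σ * ξ) * exp (-ξ ^ 2 / 2)
      = ∫ ξ, 1 / 4 * (deriv (deriv v) (b + σ * ξ) * exp (-ξ ^ 2 / 2)) -
          deriv v (b + σ * ξ) * (b / 2 + σ / 2 * ξ) * exp (-ξ ^ 2 / 2) := by
        congr 1 with ξ
        simp only [OUgen]
        ring
    _ = _ := by
        rw [integral_sub (((h₂.comp_affine b σ).integrable_mul_exp (by fun_prop)).const_mul _)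
          (((h₁.comp_affine b σ).mul (hasPolyGrowth_affine _ _)).integrable_mul_exp
            (by fun_prop)), integral_const_mul, hIBP]
        ring

theorem hasDerivAt_mehler {v : ℝ → ℝ} (hv : ContDiff ℝ 2 v) (h₀ : HasPolyGrowth v)
    (h₁ : HasPolyGrowth (deriv v)) (h₂ : HasPolyGrowth (deriv (deriv v))) (x : ℝ) {t : ℝ}
    (ht : 0 < t) : HasDerivAt (fun t => mehler t v x) (mehler t (OUgen v) x) t := by
  have hv₁ : ContDiff ℝ 1 (deriv v) := hv.deriv'
  have hball : closedBall t (t / 2) ⊆ Ioi 0 := fun r hr => by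
    have := (abs_le.1 (mem_closedBall.1 hr)).1
    rw [mem_Ioi]
    linarith
  have hD := hasDerivAt_integral_comp_affine_mul_exp
    (fun y => (hv.differentiable (by norm_num) y).hasDerivAt) hv₁.continuous h₀ h₁ (half_pos ht)
    (b' := fun r => -(exp (-r / 2) * x / 2)) (σ' := fun r => exp (-r) / (4 * ouStd r))
    (fun r _ => ((hasDerivAt_neg r).div_const 2).exp.mul_const x |>.congr_deriv (by ring))
    (fun r hr => hasDerivAt_ouStd (hball hr)) (by fun_prop)
    ((by fun_prop : Continuous _).continuousOn.div (by fun_prop : Continuous _).continuousOn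
      fun r hr => (mul_pos four_pos (ouStd_pos (hball hr))).ne')
  refine (hD.const_mul ((2 * π) ^ (-(1 : ℝ) / 2))).congr_deriv ?_
  -- After Stein's identity both sides agree since `σ := ouStd t` has `σσ' = e^{-t}/4 = 1/4 - σ²/2`.
  change _ = _ * ∫ ξ, OUgen v (exp (-t / 2) * x + ouStd t * ξ) * exp (-ξ ^ 2 / 2)
  rw [integral_ouGen_comp_affine_mul_exp hv h₁ h₂, integral_comp_affine_mul_affine_mul_exp
    (fun y => (hv₁.differentiable one_ne_zero y).hasDerivAt) (hv₁.continuous_deriv le_rfl) h₁ h₂,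
    ouStd_sq ht.le]
  have := (ouStd_pos ht).ne'
  field_simp
  ring

theorem mehler_gronwall_general (v : ℝ → ℝ) (hv : ContDiff ℝ 2 v)
    (hgrowth : ∃ (C : ℝ) (k : ℕ), ∀ x : ℝ,
      |v x| + |deriv v x| + |deriv (deriv v) x| ≤ C * (1 + x ^ 2) ^ k)
    (A₁ : ℝ) (hL : ∀ x, OUgen v x ≤ A₁ * v x)
    (s : ℝ) (hs : 0 ≤ s) (x : ℝ) :
    mehler s v x ≤ Real.exp (s * A₁) * v x := by
  obtain ⟨C, k, hC⟩ := hgrowth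
  have h₀ : HasPolyGrowth v := ⟨C, k, fun y => by
    linarith [hC y, abs_nonneg (deriv v y), abs_nonneg (deriv (deriv v) y)]⟩
  have h₁ : HasPolyGrowth (deriv v) := ⟨C, k, fun y => by
    linarith [hC y, abs_nonneg (v y), abs_nonneg (deriv (deriv v) y)]⟩
  have h₂ : HasPolyGrowth (deriv (deriv v)) := ⟨C, k, fun y => by
    linarith [hC y, abs_nonneg (v y), abs_nonneg (deriv v y)]⟩
  have hOU (t : ℝ) : mehler t (OUgen v) x ≤ A₁ * mehler t v x :=
    (mehler_mono (continuous_ouGen hv) (hasPolyGrowth_ouGen h₁ h₂) (by fun_prop)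
      (h₀.const_mul A₁) hL t x).trans_eq (mehler_const_mul t A₁ v x)
  have := le_exp_mul_of_hasDerivAt_le_mul hs
    ((continuousOn_mehler hv.continuous h₀ x).mono Icc_subset_Ici_self)
    (fun t ht => hasDerivAt_mehler hv h₀ h₁ h₂ x ht.1) (fun t _ => hOU t)
  rwa [mehler_zero, sub_zero, mul_comm A₁] at this

/-- Semigroup Grönwall comparison: if `v ∈ C²` is positive with `v, v′, v″` of at most
polynomial growth and `Lv ≤ A₁v` pointwise with `A₁ ≥ 0`, then `e^{sL}v ≤ e^{sA₁}v`
pointwise for every `s ≥ 0`. -/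
theorem mehler_gronwall (v : ℝ → ℝ) (hv : ContDiff ℝ 2 v) (hpos : ∀ x, 0 < v x)
    (hgrowth : ∃ (C : ℝ) (k : ℕ), ∀ x : ℝ,
      |v x| + |deriv v x| + |deriv (deriv v) x| ≤ C * (1 + x ^ 2) ^ k)
    (A₁ : ℝ) (hA₁ : 0 ≤ A₁) (hL : ∀ x, OUgen v x ≤ A₁ * v x)
    (s : ℝ) (hs : 0 ≤ s) (x : ℝ) :
    mehler s v x ≤ Real.exp (s * A₁) * v x :=
  mehler_gronwall_general v hv hgrowth A₁ hL s hs x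
end

section
/- Quantitative holomorphic Morse normal form: There is a universal constant c₀ > 0 with the following property. Let q ∈ ℂ, ε > 0, and let f be holomorphic on a neighborhood of the closed disc D_ε = { z : |z − q| ≤ ε }, with f′(q) = 0 and f″(q) ≠ 0. If ε ≤ c₀ |f″(q)| / sup_{D_ε} |f‴|, then there exists an injective holomorphic map φ : D_ε → ℂ with φ(q) = 0, φ′(q)² = f″(q), and f(z) = f(q) + (1/2) φ(z)² for all z ∈ D_ε; moreover |φ(z) − φ′(q)(z − q)| ≤ C |φ′(q)| |z − q|²/ε on D_ε for a universal constant C. -/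
/-!
With `k = dslope (dslope f q) q` one has `f z - f q = (z - q)² k z` exactly, and `k` is
holomorphic by the removable singularity theorem; integrating the bound on `f‴` twice gives
`|2k(z)/f''(q) - 1| ≤ 2M|z - q|/|f''(q)| ≤ 1/5`. Hence `φ = √f''(q) (z - q) √(2k/f''(q))` (principal
roots) is holomorphic on the disc, `φ² = 2(f - f q)`, and `φ` is close to its linear part.
Differentiating `φ² = 2(f - f q)` gives `φ φ' = f'`, and comparing with the Taylor expansion of
`f'` shows `|φ' - φ'(q)| ≤ 3|φ'(q)|/8` on the disc; a function whose derivative stays this close to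
a nonzero constant on a convex set is injective.
-/

open Complex Metric Set Filter Topology

section MeanValue

variable {𝕜 E : Type*} [RCLike 𝕜] [NormedAddCommGroup E] [NormedSpace 𝕜 E]

theorem norm_sub_le_mul_pow_succ_of_norm_deriv_le {G G' : 𝕜 → E} {q z : 𝕜} {r C : ℝ}
    {n : ℕ} (hC : 0 ≤ C)
    (hG : ∀ w ∈ closedBall q r, HasDerivWithinAt G (G' w) (closedBall q r) w)
    (hG' : ∀ w ∈ closedBall q r, ‖G' w‖ ≤ C * ‖w - q‖ ^ n) (hz : z ∈ closedBall q r) :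
    ‖G z - G q‖ ≤ C * ‖z - q‖ ^ (n + 1) := by
  have hsub : closedBall q ‖z - q‖ ⊆ closedBall q r :=
    closedBall_subset_closedBall (by rwa [← dist_eq_norm, ← mem_closedBall])
  have hbound : ∀ w ∈ closedBall q ‖z - q‖, ‖G' w‖ ≤ C * ‖z - q‖ ^ n := fun w hw ↦
    (hG' w (hsub hw)).trans <| by gcongr; rwa [← dist_eq_norm, ← mem_closedBall]
  calc ‖G z - G q‖ ≤ C * ‖z - q‖ ^ n * ‖z - q‖ :=
        (convex_closedBall q _).norm_image_sub_le_of_norm_hasDerivWithin_le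
          (fun w hw ↦ (hG w (hsub hw)).mono hsub) hbound
          (mem_closedBall_self (norm_nonneg _)) (by simp [dist_eq_norm])
    _ = C * ‖z - q‖ ^ (n + 1) := by ring

theorem Convex.injOn_of_norm_hasDerivWithinAt_sub_le {φ φ' : 𝕜 → E} {s : Set 𝕜}
    (hs : Convex ℝ s) {b : E} {C : ℝ} (hφ : ∀ x ∈ s, HasDerivWithinAt φ (φ' x) s x)
    (hbound : ∀ x ∈ s, ‖φ' x - b‖ ≤ C) (hC : C < ‖b‖) : InjOn φ s := by
  intro z hz w hw hzw
  have hlin := hs.norm_image_sub_le_of_norm_hasDerivWithin_le (f := fun x ↦ φ x - x • b)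
    (fun x hx ↦ by simpa using (hφ x hx).fun_sub ((hasDerivWithinAt_id x s).smul_const b))
    hbound hw hz
  rw [hzw, sub_sub_sub_cancel_left, ← sub_smul, norm_smul, mul_comm, norm_sub_rev w]
    at hlin
  by_contra hne
  exact (mul_lt_mul_of_pos_right hC (norm_pos_iff.2 (sub_ne_zero.2 hne))).not_ge hlin

end MeanValue

theorem Complex.norm_cpow_inv_two_sub_one_le (w : ℂ) : ‖w ^ (2⁻¹ : ℂ) - 1‖ ≤ ‖w - 1‖ := by
  have hre : 1 ≤ ‖w ^ (2⁻¹ : ℂ) + 1‖ := by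
    refine le_trans ?_ (re_le_norm _)
    rw [add_re, cpow_inv_two_re, one_re]
    linarith [Real.sqrt_nonneg ((‖w‖ + w.re) / 2)]
  calc ‖w ^ (2⁻¹ : ℂ) - 1‖ ≤ ‖w ^ (2⁻¹ : ℂ) - 1‖ * ‖w ^ (2⁻¹ : ℂ) + 1‖ :=
        le_mul_of_one_le_right (norm_nonneg _) hre
    _ = ‖w - 1‖ := by
        rw [← norm_mul, mul_comm, ← mul_self_sub_one, ← sq, cpow_ofNat_inv_pow]

theorem sub_eq_sq_smul_dslope_dslope {𝕜 E : Type*} [NontriviallyNormedField 𝕜]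
    [NormedAddCommGroup E] [NormedSpace 𝕜 E] {f : 𝕜 → E} {q : 𝕜} (hf : deriv f q = 0)
    (z : 𝕜) : f z - f q = (z - q) ^ 2 • dslope (dslope f q) q z := by
  rw [sq, mul_smul, sub_smul_dslope, dslope_same, hf, sub_zero, sub_smul_dslope]

theorem differentiableOn_dslope_dslope {E : Type*} [NormedAddCommGroup E] [NormedSpace ℂ E]
    [CompleteSpace E] {f : ℂ → E} {U : Set ℂ} {q : ℂ} (hU : U ∈ 𝓝 q)
    (hf : DifferentiableOn ℂ f U) : DifferentiableOn ℂ (dslope (dslope f q) q) U :=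
  (differentiableOn_dslope hU).2 ((differentiableOn_dslope hU).2 hf)

section Taylor

variable {f : ℂ → ℂ} {U : Set ℂ} {q z : ℂ} {r M : ℝ}

theorem norm_deriv_sub_le_of_norm_iteratedDeriv_three_le (hU : IsOpen U)
    (hf : DifferentiableOn ℂ f U) (hball : closedBall q r ⊆ U) (hf' : deriv f q = 0)
    (hM : ∀ w ∈ closedBall q r, ‖iteratedDeriv 3 f w‖ ≤ M) (hz : z ∈ closedBall q r) :
    ‖deriv f z - iteratedDeriv 2 f q * (z - q)‖ ≤ M * ‖z - q‖ ^ 2 := by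
  have hM0 : 0 ≤ M := (norm_nonneg _).trans (hM q (mem_closedBall_self (dist_nonneg.trans hz)))
  have hasDerivAt_deriv {g : ℂ → ℂ} (hg : DifferentiableOn ℂ g U) {w : ℂ}
      (hw : w ∈ closedBall q r) : HasDerivAt g (deriv g w) w :=
    (hg.differentiableAt (hU.mem_nhds (hball hw))).hasDerivAt
  have hf1 := hf.deriv hU
  have hsecond : ∀ w ∈ closedBall q r,
      ‖deriv (deriv f) w - iteratedDeriv 2 f q‖ ≤ M * ‖w - q‖ ^ 1 := fun w hw ↦ by
    simpa [iteratedDeriv_succ] using norm_sub_le_mul_pow_succ_of_norm_deriv_le (n := 0) hM0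
      (fun x hx ↦ (hasDerivAt_deriv (hf1.deriv hU) hx).hasDerivWithinAt)
      (by simpa [iteratedDeriv_succ] using hM) hw
  simpa [hf'] using norm_sub_le_mul_pow_succ_of_norm_deriv_le (n := 1) hM0
    (G := fun w ↦ deriv f w - iteratedDeriv 2 f q * (w - q))
    (fun x hx ↦ by
      simpa using ((hasDerivAt_deriv hf1 hx).fun_sub
        (((hasDerivAt_id x).sub_const q).const_mul (iteratedDeriv 2 f q))).hasDerivWithinAt)
    hsecond hz

theorem norm_sub_sub_le_of_norm_iteratedDeriv_three_le (hU : IsOpen U)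
    (hf : DifferentiableOn ℂ f U) (hball : closedBall q r ⊆ U) (hf' : deriv f q = 0)
    (hM : ∀ w ∈ closedBall q r, ‖iteratedDeriv 3 f w‖ ≤ M) (hz : z ∈ closedBall q r) :
    ‖f z - f q - iteratedDeriv 2 f q / 2 * (z - q) ^ 2‖ ≤ M * ‖z - q‖ ^ 3 := by
  have hM0 : 0 ≤ M := (norm_nonneg _).trans (hM q (mem_closedBall_self (dist_nonneg.trans hz)))
  have key := norm_sub_le_mul_pow_succ_of_norm_deriv_le (n := 2) hM0
    (G := fun w ↦ f w - iteratedDeriv 2 f q / 2 * (w - q) ^ 2)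
    (fun x hx ↦ by
      convert (((hf.differentiableAt (hU.mem_nhds (hball hx))).hasDerivAt).fun_sub
        ((((hasDerivAt_id' x).sub_const q).fun_pow 2).const_mul
          (iteratedDeriv 2 f q / 2))).hasDerivWithinAt using 1
      push_cast
      ring)
    (fun w hw ↦ norm_deriv_sub_le_of_norm_iteratedDeriv_three_le hU hf hball hf' hM hw) hz
  simpa [sub_right_comm] using key

theorem norm_dslope_dslope_sub_le (hU : IsOpen U)
    (hf : DifferentiableOn ℂ f U) (hball : closedBall q r ⊆ U) (hf' : deriv f q = 0)
    (hM : ∀ w ∈ closedBall q r, ‖iteratedDeriv 3 f w‖ ≤ M) (hr : 0 < r)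
    (hz : z ∈ closedBall q r) :
    ‖dslope (dslope f q) q z - iteratedDeriv 2 f q / 2‖ ≤ M * ‖z - q‖ := by
  have hne : ∀ w ∈ closedBall q r, w ≠ q →
      ‖dslope (dslope f q) q w - iteratedDeriv 2 f q / 2‖ ≤ M * ‖w - q‖ := by
    intro w hw hwq
    have hpos : 0 < ‖w - q‖ ^ 2 := by positivity [sub_ne_zero.2 hwq]
    have := norm_sub_sub_le_of_norm_iteratedDeriv_three_le hU hf hball hf' hM hw
    rw [sub_eq_sq_smul_dslope_dslope hf', smul_eq_mul, mul_comm (iteratedDeriv 2 f q / 2),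
      ← mul_sub, norm_mul, norm_pow] at this
    nlinarith
  have hq : ‖dslope (dslope f q) q q - iteratedDeriv 2 f q / 2‖ ≤ M * ‖q - q‖ := by
    have hU' : U ∈ 𝓝 q := hU.mem_nhds (hball (mem_closedBall_self hr.le))
    have hk : ContinuousAt (dslope (dslope f q) q) q :=
      (differentiableOn_dslope_dslope hU' hf).continuousOn.continuousAt hU'
    refine le_of_tendsto_of_tendsto (b := 𝓝[≠] q)
      ((hk.sub continuousAt_const).norm.tendsto.mono_left nhdsWithin_le_nhds)
      (((tendsto_id.sub_const q).norm.const_mul M).mono_left nhdsWithin_le_nhds) ?_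
    filter_upwards [self_mem_nhdsWithin, nhdsWithin_le_nhds (closedBall_mem_nhds q hr)]
      with w hwq hw
    exact hne w hw hwq
  rcases eq_or_ne z q with rfl | hzq
  exacts [hq, hne z hz hzq]

end Taylor

noncomputable def morseRatio (f : ℂ → ℂ) (q z : ℂ) : ℂ :=
  2 * dslope (dslope f q) q z / iteratedDeriv 2 f q

noncomputable def morseCoordinate (f : ℂ → ℂ) (q z : ℂ) : ℂ :=
  iteratedDeriv 2 f q ^ (2⁻¹ : ℂ) * (z - q) * morseRatio f q z ^ (2⁻¹ : ℂ)

section MorseCoordinate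

variable {f : ℂ → ℂ} {U : Set ℂ} {q z : ℂ} {r M : ℝ}

theorem morseCoordinate_self : morseCoordinate f q q = 0 := by
  simp [morseCoordinate]

theorem morseCoordinate_sq (hf' : deriv f q = 0) (ha : iteratedDeriv 2 f q ≠ 0) (z : ℂ) :
    morseCoordinate f q z ^ 2 = 2 * (f z - f q) := by
  rw [morseCoordinate, mul_pow, mul_pow, cpow_ofNat_inv_pow, cpow_ofNat_inv_pow, morseRatio,
    sub_eq_sq_smul_dslope_dslope hf', smul_eq_mul]
  field_simp

theorem norm_morseCoordinate_sub_le (z : ℂ) :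
    ‖morseCoordinate f q z - iteratedDeriv 2 f q ^ (2⁻¹ : ℂ) * (z - q)‖ ≤
      ‖iteratedDeriv 2 f q ^ (2⁻¹ : ℂ)‖ * ‖z - q‖ * ‖morseRatio f q z - 1‖ := by
  rw [morseCoordinate, ← mul_sub_one, norm_mul, norm_mul]
  gcongr
  exact norm_cpow_inv_two_sub_one_le _

theorem morseCoordinate_mul_deriv (hf' : deriv f q = 0) (ha : iteratedDeriv 2 f q ≠ 0)
    (hf : DifferentiableAt ℂ f z) (hφ : DifferentiableAt ℂ (morseCoordinate f q) z) :
    morseCoordinate f q z * deriv (morseCoordinate f q) z = deriv f z := by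
  have hsq : HasDerivAt (fun w ↦ morseCoordinate f q w ^ 2)
      (2 * morseCoordinate f q z * deriv (morseCoordinate f q) z) z := by
    simpa using hφ.hasDerivAt.fun_pow 2
  have hrhs : HasDerivAt (fun w ↦ 2 * (f w - f q)) (2 * deriv f z) z := by
    simpa using (hf.hasDerivAt.sub_const (f q)).const_mul 2
  simp only [morseCoordinate_sq hf' ha] at hsq
  linear_combination hsq.unique hrhs / 2

theorem norm_morseRatio_sub_one_le (hU : IsOpen U)
    (hf : DifferentiableOn ℂ f U) (hball : closedBall q r ⊆ U) (hf' : deriv f q = 0)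
    (ha : iteratedDeriv 2 f q ≠ 0) (hM : ∀ w ∈ closedBall q r, ‖iteratedDeriv 3 f w‖ ≤ M)
    (hr : 0 < r) (hz : z ∈ closedBall q r) :
    ‖morseRatio f q z - 1‖ ≤ 2 * M / ‖iteratedDeriv 2 f q‖ * ‖z - q‖ := by
  have hsub : morseRatio f q z - 1 =
      2 * (dslope (dslope f q) q z - iteratedDeriv 2 f q / 2) / iteratedDeriv 2 f q := by
    rw [morseRatio]
    field_simp
  rw [hsub, norm_div, norm_mul, Complex.norm_two, div_mul_eq_mul_div, mul_assoc]
  gcongr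
  exact norm_dslope_dslope_sub_le hU hf hball hf' hM hr hz

theorem differentiableAt_morseCoordinate (hk : DifferentiableAt ℂ (dslope (dslope f q) q) z)
    (hv : ‖morseRatio f q z - 1‖ < 1) : DifferentiableAt ℂ (morseCoordinate f q) z := by
  have hslit : morseRatio f q z ∈ slitPlane :=
    ball_one_subset_slitPlane (by rwa [mem_ball, dist_eq_norm])
  exact ((differentiableAt_const _).mul (differentiableAt_id.sub_const q)).mul
    ((((differentiableAt_const 2).mul hk).div_const _).cpow_const hslit)

theorem hasDerivAt_morseCoordinate_self (hk : DifferentiableAt ℂ (dslope (dslope f q) q) q)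
    (hv : morseRatio f q q = 1) :
    HasDerivAt (morseCoordinate f q) (iteratedDeriv 2 f q ^ (2⁻¹ : ℂ)) q := by
  have hslit : morseRatio f q q ∈ slitPlane := hv ▸ one_mem_slitPlane
  have hroot : DifferentiableAt ℂ (fun z ↦ morseRatio f q z ^ (2⁻¹ : ℂ)) q :=
    (((differentiableAt_const 2).mul hk).div_const _).cpow_const hslit
  refine ((((hasDerivAt_id' q).sub_const q).const_mul _).fun_mul hroot.hasDerivAt).congr_deriv
    ?_
  simp [hv]

end MorseCoordinate

section OnDisc

variable {f : ℂ → ℂ} {U : Set ℂ} {q z : ℂ} {r M : ℝ}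

theorem deriv_morseCoordinate_self (hU : IsOpen U)
    (hf : DifferentiableOn ℂ f U) (hball : closedBall q r ⊆ U) (hf' : deriv f q = 0)
    (ha : iteratedDeriv 2 f q ≠ 0) (hM : ∀ w ∈ closedBall q r, ‖iteratedDeriv 3 f w‖ ≤ M)
    (hr : 0 < r) : deriv (morseCoordinate f q) q = iteratedDeriv 2 f q ^ (2⁻¹ : ℂ) := by
  have hq : q ∈ closedBall q r := mem_closedBall_self hr.le
  have hU' : U ∈ 𝓝 q := hU.mem_nhds (hball hq)
  refine (hasDerivAt_morseCoordinate_self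
    ((differentiableOn_dslope_dslope hU' hf).differentiableAt hU') ?_).deriv
  simpa [sub_eq_zero] using norm_morseRatio_sub_one_le hU hf hball hf' ha hM hr hq

theorem norm_morseRatio_sub_one_le_div (hU : IsOpen U)
    (hf : DifferentiableOn ℂ f U) (hball : closedBall q r ⊆ U) (hf' : deriv f q = 0)
    (ha : iteratedDeriv 2 f q ≠ 0) (hM : ∀ w ∈ closedBall q r, ‖iteratedDeriv 3 f w‖ ≤ M)
    (hr : 0 < r) (hsmall : 10 * M * r ≤ ‖iteratedDeriv 2 f q‖) (hz : z ∈ closedBall q r) :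
    ‖morseRatio f q z - 1‖ ≤ ‖z - q‖ / (5 * r) := by
  have ha' : 0 < ‖iteratedDeriv 2 f q‖ := norm_pos_iff.2 ha
  refine (norm_morseRatio_sub_one_le hU hf hball hf' ha hM hr hz).trans ?_
  rw [div_mul_eq_mul_div, div_le_div_iff₀ ha' (by positivity)]
  nlinarith [norm_nonneg (z - q)]

theorem differentiableAt_morseCoordinate_of_mem_closedBall (hU : IsOpen U)
    (hf : DifferentiableOn ℂ f U) (hball : closedBall q r ⊆ U) (hf' : deriv f q = 0)
    (ha : iteratedDeriv 2 f q ≠ 0) (hM : ∀ w ∈ closedBall q r, ‖iteratedDeriv 3 f w‖ ≤ M)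
    (hr : 0 < r) (hsmall : 10 * M * r ≤ ‖iteratedDeriv 2 f q‖) (hz : z ∈ closedBall q r) :
    DifferentiableAt ℂ (morseCoordinate f q) z := by
  have hU' : U ∈ 𝓝 q := hU.mem_nhds (hball (mem_closedBall_self hr.le))
  refine differentiableAt_morseCoordinate
    ((differentiableOn_dslope_dslope hU' hf).differentiableAt (hU.mem_nhds (hball hz))) ?_
  have hzr : ‖z - q‖ ≤ r := by rwa [mem_closedBall, dist_eq_norm] at hz
  calc ‖morseRatio f q z - 1‖ ≤ ‖z - q‖ / (5 * r) :=
        norm_morseRatio_sub_one_le_div hU hf hball hf' ha hM hr hsmall hz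
    _ < 1 := by rw [div_lt_one (by positivity)]; linarith

theorem norm_deriv_morseCoordinate_sub_le (hU : IsOpen U)
    (hf : DifferentiableOn ℂ f U) (hball : closedBall q r ⊆ U) (hf' : deriv f q = 0)
    (ha : iteratedDeriv 2 f q ≠ 0) (hM : ∀ w ∈ closedBall q r, ‖iteratedDeriv 3 f w‖ ≤ M)
    (hr : 0 < r) (hsmall : 10 * M * r ≤ ‖iteratedDeriv 2 f q‖) (hz : z ∈ closedBall q r) :
    ‖deriv (morseCoordinate f q) z - iteratedDeriv 2 f q ^ (2⁻¹ : ℂ)‖ ≤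
      3 / 8 * ‖iteratedDeriv 2 f q ^ (2⁻¹ : ℂ)‖ := by
  rcases eq_or_ne z q with rfl | hzq
  · rw [deriv_morseCoordinate_self hU hf hball hf' ha hM hr, sub_self, norm_zero]
    positivity
  set a := iteratedDeriv 2 f q
  set b := a ^ (2⁻¹ : ℂ)
  set d := deriv (morseCoordinate f q) z
  set s := morseRatio f q z ^ (2⁻¹ : ℂ)
  have hb : b ^ 2 = a := cpow_ofNat_inv_pow a 2
  have hw : 0 < ‖z - q‖ := norm_pos_iff.2 (sub_ne_zero.2 hzq)
  have hzr : ‖z - q‖ ≤ r := by rwa [mem_closedBall, dist_eq_norm] at hz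
  have hM0 : 0 ≤ M := (norm_nonneg _).trans (hM q (mem_closedBall_self hr.le))
  have hs1 : ‖s - 1‖ ≤ 2 * M / ‖a‖ * ‖z - q‖ :=
    (norm_cpow_inv_two_sub_one_le _).trans (norm_morseRatio_sub_one_le hU hf hball hf' ha hM hr hz)
  have hs : 4 / 5 ≤ ‖s‖ := by
    have : 2 * M / ‖a‖ * ‖z - q‖ ≤ 1 / 5 := by
      rw [div_mul_eq_mul_div, div_le_iff₀ (norm_pos_iff.2 ha)]
      nlinarith
    linarith [norm_sub_norm_le (1 : ℂ) s, norm_sub_rev (1 : ℂ) s, (norm_one : ‖(1 : ℂ)‖ = 1)]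
  have hkey :
      b * (z - q) * s * (d - b) = (deriv f z - a * (z - q)) - a * (z - q) * (s - 1) := by
    have hprod := morseCoordinate_mul_deriv hf' ha
      (hf.differentiableAt (hU.mem_nhds (hball hz)))
      (differentiableAt_morseCoordinate_of_mem_closedBall hU hf hball hf' ha hM hr hsmall hz)
    have hφ : morseCoordinate f q z = b * (z - q) * s := rfl
    linear_combination hprod - d * hφ - (z - q) * s * hb
  have hbound : ‖b‖ * ‖s‖ * ‖d - b‖ * ‖z - q‖ ≤ 3 * M * ‖z - q‖ * ‖z - q‖ :=
    calc ‖b‖ * ‖s‖ * ‖d - b‖ * ‖z - q‖ = ‖b * (z - q) * s * (d - b)‖ := by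
          simp only [norm_mul]; ring
      _ ≤ ‖deriv f z - a * (z - q)‖ + ‖a‖ * ‖z - q‖ * ‖s - 1‖ := by
          rw [hkey, ← norm_mul, ← norm_mul]; exact norm_sub_le _ _
      _ ≤ M * ‖z - q‖ ^ 2 + ‖a‖ * ‖z - q‖ * (2 * M / ‖a‖ * ‖z - q‖) := by
          gcongr
          exact norm_deriv_sub_le_of_norm_iteratedDeriv_three_le hU hf hball hf' hM hz
      _ = 3 * M * ‖z - q‖ * ‖z - q‖ := by
          field_simp [norm_pos_iff.2 ha]
          ring
  have hbs : ‖b‖ * ‖s‖ * ‖d - b‖ ≤ 3 / 10 * ‖b‖ ^ 2 := by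
    rw [← norm_pow, hb]
    nlinarith [le_of_mul_le_mul_right hbound hw]
  have hb0 : 0 < ‖b‖ := norm_pos_iff.2 (cpow_ne_zero_iff.2 (.inl ha))
  nlinarith [mul_le_mul_of_nonneg_right hs (by positivity : 0 ≤ ‖b‖ * ‖d - b‖)]

theorem norm_morseCoordinate_sub_le_of_mem_closedBall (hU : IsOpen U)
    (hf : DifferentiableOn ℂ f U) (hball : closedBall q r ⊆ U) (hf' : deriv f q = 0)
    (ha : iteratedDeriv 2 f q ≠ 0) (hM : ∀ w ∈ closedBall q r, ‖iteratedDeriv 3 f w‖ ≤ M)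
    (hr : 0 < r) (hsmall : 10 * M * r ≤ ‖iteratedDeriv 2 f q‖) (hz : z ∈ closedBall q r) :
    ‖morseCoordinate f q z - iteratedDeriv 2 f q ^ (2⁻¹ : ℂ) * (z - q)‖ ≤
      1 / 5 * ‖iteratedDeriv 2 f q ^ (2⁻¹ : ℂ)‖ * ‖z - q‖ ^ 2 / r :=
  calc _ ≤ ‖iteratedDeriv 2 f q ^ (2⁻¹ : ℂ)‖ * ‖z - q‖ * (‖z - q‖ / (5 * r)) := by
        grw [norm_morseCoordinate_sub_le z,
          norm_morseRatio_sub_one_le_div hU hf hball hf' ha hM hr hsmall hz]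
    _ = _ := by field_simp

end OnDisc

/-- Quantitative holomorphic Morse normal form: there are universal constants
`c₀, C > 0` such that if `f` is holomorphic on a neighborhood of the closed disc
`D_ε = {|z − q| ≤ ε}` with `f′(q) = 0`, `f″(q) ≠ 0`, and
`ε ≤ c₀|f″(q)|/sup_{D_ε}|f‴|`, then there is an injective holomorphic `φ` on `D_ε`
with `φ(q) = 0`, `φ′(q)² = f″(q)`, `f(z) = f(q) + φ(z)²/2` on `D_ε`, and
`|φ(z) − φ′(q)(z − q)| ≤ C|φ′(q)||z − q|²/ε` on `D_ε`. -/
theorem quantitative_morse_normal_form :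
    ∃ c₀ > (0 : ℝ), ∃ C > (0 : ℝ),
      ∀ (f : ℂ → ℂ) (q : ℂ) (ε : ℝ), 0 < ε →
        ∀ U : Set ℂ, IsOpen U → Metric.closedBall q ε ⊆ U → DifferentiableOn ℂ f U →
        deriv f q = 0 → iteratedDeriv 2 f q ≠ 0 →
        ∀ M : ℝ, 0 < M →
          (∀ z ∈ Metric.closedBall q ε, ‖iteratedDeriv 3 f z‖ ≤ M) →
          ε ≤ c₀ * ‖iteratedDeriv 2 f q‖ / M →
          ∃ φ : ℂ → ℂ,
            Set.InjOn φ (Metric.closedBall q ε) ∧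
            DifferentiableOn ℂ φ (Metric.closedBall q ε) ∧
            φ q = 0 ∧
            (deriv φ q) ^ 2 = iteratedDeriv 2 f q ∧
            (∀ z ∈ Metric.closedBall q ε, f z = f q + (1 / 2) * (φ z) ^ 2) ∧
            (∀ z ∈ Metric.closedBall q ε,
              ‖φ z - deriv φ q * (z - q)‖ ≤ C * ‖deriv φ q‖ * ‖z - q‖ ^ 2 / ε) := by
  refine ⟨1 / 10, by norm_num, 1 / 5, by norm_num, ?_⟩
  intro f q ε hε U hU hball hf hf' ha M hM hM3 hεM
  have hsmall : 10 * M * ε ≤ ‖iteratedDeriv 2 f q‖ := by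
    rw [le_div_iff₀ hM] at hεM
    linarith
  have hdiff z (hz : z ∈ closedBall q ε) :=
    differentiableAt_morseCoordinate_of_mem_closedBall hU hf hball hf' ha hM3 hε hsmall hz
  have hderiv := deriv_morseCoordinate_self hU hf hball hf' ha hM3 hε
  have hb : 0 < ‖iteratedDeriv 2 f q ^ (2⁻¹ : ℂ)‖ :=
    norm_pos_iff.2 (cpow_ne_zero_iff.2 (.inl ha))
  refine ⟨morseCoordinate f q, ?_, fun z hz ↦ (hdiff z hz).differentiableWithinAt,
    morseCoordinate_self, by rw [hderiv, cpow_ofNat_inv_pow], fun z _ ↦ ?_, fun z hz ↦ ?_⟩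
  · refine (convex_closedBall q ε).injOn_of_norm_hasDerivWithinAt_sub_le
      (fun z hz ↦ (hdiff z hz).hasDerivAt.hasDerivWithinAt)
      (fun z hz ↦ norm_deriv_morseCoordinate_sub_le hU hf hball hf' ha hM3 hε hsmall hz) ?_
    linarith
  · linear_combination -(morseCoordinate_sq hf' ha z) / 2
  · rw [hderiv]
    exact norm_morseCoordinate_sub_le_of_mem_closedBall hU hf hball hf' ha hM3 hε hsmall hz
end

section
/- Inclusion–exclusion identity for small gaps: Let x₁ < x₂ < ⋯ < x_N be real numbers and δ > 0. Then #{ j ∈ {1,…,N−1} : x_{j+1} − x_j ≤ δ } = Σ_{m=2}^{N} (−1)^m · #{ S ⊆ {1,…,N} : |S| = m and max_{i,j ∈ S} |x_i − x_j| ≤ δ }, i.e. the number of consecutive gaps of size at most δ equals the alternating sum over m of the number of m-element subsets of diameter at most δ. -/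
/-!
Group the sets of diameter at most `δ` with at least two elements by their least and greatest
elements `a < b`. As `x` is monotone, such a set has diameter at most `δ` iff `x b - x a ≤ δ`,
and its remaining elements form an arbitrary subset of the open interval `(a, b)`. The signed
count `∑ (-1) ^ #t` over the subsets `t` of `(a, b)` vanishes unless the interval is empty, that
is, unless `b` covers `a`; so only the consecutive gaps survive.
-/

open Finset

namespace Finset

section LinearOrder

variable {α : Type*} [LinearOrder α] [LocallyFiniteOrder α] {a b : α} {t : Finset α}

theorem Ioo_eq_empty_iff_covBy (hab : a < b) : Ioo a b = ∅ ↔ a ⋖ b := by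
  rw [covBy_iff_Ioo_eq, ← coe_Ioo, coe_eq_empty, and_iff_right hab]

open scoped Classical in
theorem sum_powerset_Ioo_neg_one_pow_card (hab : a < b) :
    ∑ s ∈ (Ioo a b).powerset, (-1 : ℤ) ^ #s = if a ⋖ b then 1 else 0 := by
  simp only [sum_powerset_neg_one_pow_card, Ioo_eq_empty_iff_covBy hab]

theorem insert_insert_subset_Icc (hab : a ≤ b) (ht : t ⊆ Ioo a b) :
    insert a (insert b t) ⊆ Icc a b :=
  insert_subset (left_mem_Icc.2 hab) <|
    insert_subset (right_mem_Icc.2 hab) (ht.trans Ioo_subset_Icc_self)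

theorem isLeast_insert_insert (hab : a ≤ b) (ht : t ⊆ Ioo a b) :
    IsLeast ↑(insert a (insert b t)) a :=
  ⟨mem_insert_self _ _, fun _ hk => (mem_Icc.1 (insert_insert_subset_Icc hab ht hk)).1⟩

theorem isGreatest_insert_insert (hab : a ≤ b) (ht : t ⊆ Ioo a b) :
    IsGreatest ↑(insert a (insert b t)) b :=
  ⟨mem_insert_of_mem (mem_insert_self _ _),
    fun _ hk => (mem_Icc.1 (insert_insert_subset_Icc hab ht hk)).2⟩

theorem right_notMem_of_subset_Ioo (ht : t ⊆ Ioo a b) : b ∉ t :=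
  fun h => (mem_Ioo.1 (ht h)).2.false

theorem left_notMem_insert_of_subset_Ioo (hab : a < b) (ht : t ⊆ Ioo a b) :
    a ∉ insert b t := by
  rw [mem_insert, not_or]
  exact ⟨hab.ne, fun h => (mem_Ioo.1 (ht h)).1.false⟩

theorem card_insert_insert_of_subset_Ioo (hab : a < b) (ht : t ⊆ Ioo a b) :
    #(insert a (insert b t)) = #t + 2 := by
  rw [card_insert_of_notMem (left_notMem_insert_of_subset_Ioo hab ht),
    card_insert_of_notMem (right_notMem_of_subset_Ioo ht)]

theorem erase_min'_erase_max'_subset_Ioo (s : Finset α) (hs : s.Nonempty) :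
    (s.erase (s.min' hs)).erase (s.max' hs) ⊆ Ioo (s.min' hs) (s.max' hs) := by
  intro k hk
  obtain ⟨hk_max, hk_min, hks⟩ : k ≠ s.max' hs ∧ k ≠ s.min' hs ∧ k ∈ s := by
    simpa only [mem_erase] using hk
  exact mem_Ioo.2 ⟨(s.min'_le k hks).lt_of_ne' hk_min, (s.le_max' k hks).lt_of_ne hk_max⟩

omit [LocallyFiniteOrder α] in
theorem insert_min'_insert_max'_erase_erase (s : Finset α) (hs : s.Nonempty) :
    insert (s.min' hs) (insert (s.max' hs) ((s.erase (s.min' hs)).erase (s.max' hs))) = s := by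
  have := s.min'_mem hs
  have := s.max'_mem hs
  ext k
  simp only [mem_insert, mem_erase]
  grind

theorem sum_two_le_card_eq_sum_sum_powerset_Ioo [Fintype α] {M : Type*} [AddCommMonoid M]
    (w : Finset α → M) :
    ∑ s with 2 ≤ #s, w s =
      ∑ p : α × α with p.1 < p.2, ∑ t ∈ (Ioo p.1 p.2).powerset, w (insert p.1 (insert p.2 t)) := by
  rw [← sum_sigma _ (fun p : α × α => (Ioo p.1 p.2).powerset)
    (fun q => w (insert q.1.1 (insert q.1.2 q.2)))]
  have hne {s : Finset α} (hs : s ∈ ({s | 2 ≤ #s} : Finset _)) : s.Nonempty :=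
    card_pos.1 (zero_lt_two.trans_le (mem_filter.1 hs).2)
  refine sum_bij'
    (fun s hs => ⟨(s.min' (hne hs), s.max' (hne hs)),
      (s.erase (s.min' (hne hs))).erase (s.max' (hne hs))⟩)
    (fun q _ => insert q.1.1 (insert q.1.2 q.2)) ?_ ?_ ?_ ?_ ?_
  · intro s hs
    simp only [mem_sigma, mem_filter, mem_univ, true_and, mem_powerset]
    exact ⟨s.min'_lt_max'_of_card (one_lt_two.trans_le (mem_filter.1 hs).2),
      erase_min'_erase_max'_subset_Ioo s _⟩
  · rintro ⟨⟨a, b⟩, t⟩ hq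
    simp only [mem_sigma, mem_filter, mem_univ, true_and, mem_powerset] at hq ⊢
    rw [card_insert_insert_of_subset_Ioo hq.1 hq.2]
    omega
  · intro s hs
    exact insert_min'_insert_max'_erase_erase s _
  · rintro ⟨⟨a, b⟩, t⟩ hq
    simp only [mem_sigma, mem_filter, mem_univ, true_and, mem_powerset] at hq
    obtain ⟨hab, ht⟩ := hq
    have hmin := (isLeast_min' _ (insert_nonempty _ _)).unique (isLeast_insert_insert hab.le ht)
    have hmax :=
      (isGreatest_max' _ (insert_nonempty _ _)).unique (isGreatest_insert_insert hab.le ht)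
    simp only [hmin, hmax, erase_insert (left_notMem_insert_of_subset_Ioo hab ht),
      erase_insert (right_notMem_of_subset_Ioo ht)]
  · intro s hs
    rw [insert_min'_insert_max'_erase_erase]

theorem forall_lt_imp_insert_insert_iff {r : α → α → Prop}
    (hr : ∀ ⦃a i j b⦄, a ≤ i → j ≤ b → r a b → r i j) (hab : a < b) (ht : t ⊆ Ioo a b) :
    (∀ i ∈ insert a (insert b t), ∀ j ∈ insert a (insert b t), i < j → r i j) ↔ r a b := by
  refine ⟨fun h => h a (mem_insert_self _ _) b (mem_insert_of_mem (mem_insert_self _ _)) hab,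
    fun hrab i hi j hj _ => hr ?_ ?_ hrab⟩
  · exact (isLeast_insert_insert hab.le ht).2 hi
  · exact (isGreatest_insert_insert hab.le ht).2 hj

open scoped Classical in
theorem sum_neg_one_pow_card_filter_eq_card_covBy [Fintype α] (r : α → α → Prop)
    (hr : ∀ ⦃a i j b⦄, a ≤ i → j ≤ b → r a b → r i j) :
    ∑ s with 2 ≤ #s ∧ ∀ i ∈ s, ∀ j ∈ s, i < j → r i j, (-1 : ℤ) ^ #s =
      #{p : α × α | p.1 ⋖ p.2 ∧ r p.1 p.2} := by
  calc ∑ s with 2 ≤ #s ∧ ∀ i ∈ s, ∀ j ∈ s, i < j → r i j, (-1 : ℤ) ^ #s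
      = ∑ s with 2 ≤ #s, if ∀ i ∈ s, ∀ j ∈ s, i < j → r i j then (-1 : ℤ) ^ #s else 0 := by
        rw [← filter_filter, sum_filter]
    _ = ∑ p : α × α with p.1 < p.2, if r p.1 p.2 then
          ∑ t ∈ (Ioo p.1 p.2).powerset, (-1 : ℤ) ^ #t else 0 := by
        rw [sum_two_le_card_eq_sum_sum_powerset_Ioo]
        refine sum_congr rfl fun p hp => ?_
        have hlt : p.1 < p.2 := (mem_filter.1 hp).2
        split_ifs with hrp
        · refine sum_congr rfl fun t ht => ?_
          have ht := mem_powerset.1 ht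
          rw [if_pos ((forall_lt_imp_insert_insert_iff hr hlt ht).2 hrp),
            card_insert_insert_of_subset_Ioo hlt ht, pow_add]
          norm_num
        · refine sum_eq_zero fun t ht => ?_
          rw [if_neg (mt (forall_lt_imp_insert_insert_iff hr hlt (mem_powerset.1 ht)).1 hrp)]
    _ = ∑ p : α × α with p.1 < p.2, if p.1 ⋖ p.2 ∧ r p.1 p.2 then 1 else 0 := by
        refine sum_congr rfl fun p hp => ?_
        rw [sum_powerset_Ioo_neg_one_pow_card (mem_filter.1 hp).2, ite_and]
        split_ifs <;> rfl
    _ = #{p : α × α | p.1 ⋖ p.2 ∧ r p.1 p.2} := by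
        rw [sum_boole, filter_filter]
        congr 2
        ext p
        simp only [mem_filter, mem_univ, true_and]
        exact ⟨fun h => h.2, fun h => ⟨h.1.lt, h⟩⟩

end LinearOrder

theorem sum_Icc_mul_card_filter_card_eq {α R : Type*} [Fintype α] [CommSemiring R]
    (P : Finset α → Prop) [DecidablePred P] (k : ℕ) (f : ℕ → R) :
    ∑ m ∈ Icc k (Fintype.card α), f m * #{s | #s = m ∧ P s} = ∑ s with k ≤ #s ∧ P s, f #s := by
  have hmaps : ∀ s ∈ ({s | k ≤ #s ∧ P s} : Finset (Finset α)), #s ∈ Icc k (Fintype.card α) :=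
    fun s hs => mem_Icc.2 ⟨(mem_filter.1 hs).2.1, card_le_univ s⟩
  rw [← sum_fiberwise_of_maps_to hmaps]
  refine sum_congr rfl fun m hm => ?_
  have hfiber : ({s | k ≤ #s ∧ P s} : Finset (Finset α)).filter (#· = m) =
      ({s | #s = m ∧ P s} : Finset (Finset α)) := by
    ext s
    simp only [mem_filter, mem_univ, true_and]
    constructor
    · rintro ⟨⟨-, hP⟩, hs⟩; exact ⟨hs, hP⟩
    · rintro ⟨hs, hP⟩; exact ⟨⟨hs ▸ (mem_Icc.1 hm).1, hP⟩, hs⟩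
  rw [hfiber, sum_congr rfl fun s hs => congrArg f (mem_filter.1 hs).2.1, sum_const, nsmul_eq_mul,
    mul_comm]

end Finset

theorem forall_abs_sub_le_iff_of_monotone {α β : Type*} [LinearOrder α] [AddCommGroup β]
    [LinearOrder β] [IsOrderedAddMonoid β] {x : α → β} (hx : Monotone x) {δ : β} (hδ : 0 ≤ δ)
    (s : Finset α) :
    (∀ i ∈ s, ∀ j ∈ s, |x i - x j| ≤ δ) ↔ ∀ i ∈ s, ∀ j ∈ s, i < j → x j - x i ≤ δ := by
  refine ⟨fun h i hi j hj _ => (le_abs_self _).trans ((abs_sub_comm _ _).trans_le (h i hi j hj)),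
    fun h i hi j hj => ?_⟩
  rcases lt_trichotomy i j with hij | rfl | hji
  · rw [abs_sub_comm, abs_of_nonneg (sub_nonneg.2 (hx hij.le))]
    exact h i hi j hj hij
  · simpa using hδ
  · rw [abs_of_nonneg (sub_nonneg.2 (hx hji.le))]
    exact h j hj i hi hji

open scoped Classical in
theorem Fin.natCard_succ_pairs_eq_card_covBy (N : ℕ) (r : Fin N → Fin N → Prop) :
    Nat.card {j : ℕ // ∃ h : j + 1 < N, r ⟨j, Nat.lt_of_succ_lt h⟩ ⟨j + 1, h⟩} =
      #{p : Fin N × Fin N | p.1 ⋖ p.2 ∧ r p.1 p.2} := by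
  have hsucc {p : Fin N × Fin N} (hp : p.1 ⋖ p.2) : (p.1 : ℕ) + 1 = p.2 := by simpa using hp
  rw [← Fintype.card_subtype, ← Nat.card_eq_fintype_card]
  refine Nat.card_congr
    { toFun := fun j => ⟨(⟨j.1, Nat.lt_of_succ_lt j.2.1⟩, ⟨j.1 + 1, j.2.1⟩), by simp, j.2.2⟩
      invFun := fun p => ⟨p.1.1, ?_⟩
      left_inv := fun j => rfl
      right_inv := fun p => Subtype.ext (Prod.ext rfl (Fin.ext (hsucc p.2.1))) }
  obtain ⟨⟨a, b⟩, hab, hr⟩ := p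
  have hlt : (a : ℕ) + 1 < N := hsucc hab ▸ b.2
  obtain rfl : b = ⟨a + 1, hlt⟩ := Fin.ext (hsucc hab).symm
  exact ⟨hlt, hr⟩

/-- Inclusion–exclusion identity for small gaps: for strictly increasing reals
`x₁ < ⋯ < x_N` and `δ > 0`, the number of consecutive gaps of size at most `δ`
equals the alternating sum over `m` of the number of `m`-element subsets of
diameter at most `δ`. -/
theorem inclusion_exclusion_small_gaps (N : ℕ) (x : Fin N → ℝ) (hx : StrictMono x)
    (δ : ℝ) (hδ : 0 < δ) :
    (Nat.card {j : ℕ // ∃ h : j + 1 < N,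
        x ⟨j + 1, h⟩ - x ⟨j, by omega⟩ ≤ δ} : ℤ)
      = ∑ m ∈ Finset.Icc 2 N, (-1 : ℤ) ^ m *
          (Nat.card {S : Finset (Fin N) //
            S.card = m ∧ ∀ i ∈ S, ∀ j ∈ S, |x i - x j| ≤ δ} : ℤ) := by
  classical
  have hregroup := sum_Icc_mul_card_filter_card_eq
    (fun S : Finset (Fin N) => ∀ i ∈ S, ∀ j ∈ S, |x i - x j| ≤ δ) 2 ((-1 : ℤ) ^ ·)
  rw [Fintype.card_fin] at hregroup
  simp only [Nat.card_eq_fintype_card (α := {S : Finset (Fin N) // _}), Fintype.card_subtype]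
  rw [hregroup]
  simp only [forall_abs_sub_le_iff_of_monotone hx.monotone hδ.le]
  have hpairs := Fin.natCard_succ_pairs_eq_card_covBy N (fun a b => x b - x a ≤ δ)
  have hcount := sum_neg_one_pow_card_filter_eq_card_covBy (fun a b => x b - x a ≤ δ)
    fun a i j b hai hjb hab => by linarith [hx.monotone hai, hx.monotone hjb]
  rw [hpairs, ← hcount]
  -- the two sums differ only in the `Decidable` instances of their filters
  congr! 2
end
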